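/- Let A < ℝ be a unital subring, let K₀ be a convex compact PSL₂(A)-space, and let H be a group of piecewise-SL₂(A) transformations of ℙ¹_ℝ acting on the space K of measurable maps f : ℙ¹_ℝ → K₀ by (h·f)(x) = h|_{h⁻¹x}(f(h⁻¹x)). Suppose that for every g ∈ PSL₂(A) and almost every x ∈ ℙ¹_ℝ there exists h ∈ H whose projective piece at x equals g. Then an element f ∈ K is fixed by H if and only if it is fixed by PSL₂(A), i.e. if and only if f(gx) = g·f(x) for all g ∈ PSL₂(A) and almost every x. -/

import Mathlib

/-!
For `g ∈ SL₂(A)`, almost every point lies in the open set where some `h ∈ H` has piece `g`;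
countably many `h` already cover it (Lindelöf), so `H`-invariance of `f` gives
`f (g x) = g • f x` almost everywhere. Conversely, off its finitely many breakpoints each
`h ∈ H` is covered by the open sets on which it has a fixed piece `g ∈ SL₂(A)`; again
countably many suffice, and on each of them `h` acts on `f` as `g` does. The piece of `h` at
a point is determined up to `±1`, and `-1` acts trivially, so this action does not depend on
the choice of `g`.
-/

open Matrix Filter Topology MeasureTheory

noncomputable section

/-- The group of homeomorphisms of a topological space, under composition. -/
instance Homeomorph.instGroup' {X : Type*} [TopologicalSpace X] : Group (X ≃ₜ X) where
  mul a b := b.trans a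
  one := Homeomorph.refl X
  inv := Homeomorph.symm
  mul_assoc a b c := Homeomorph.ext fun _ => rfl
  one_mul a := Homeomorph.ext fun _ => rfl
  mul_one a := Homeomorph.ext fun _ => rfl
  inv_mul_cancel a := Homeomorph.ext fun x => a.symm_apply_apply x

@[simp] lemma Homeomorph.mul_apply' {X : Type*} [TopologicalSpace X]
    (a b : X ≃ₜ X) (x : X) : (a * b) x = a (b x) := rfl

@[simp] lemma Homeomorph.inv_coe {X : Type*} [TopologicalSpace X]
    (a : X ≃ₜ X) : (a⁻¹ : X ≃ₜ X) = a.symm := rfl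

abbrev SL2 (R : Type*) [CommRing R] := Matrix.SpecialLinearGroup (Fin 2) R

namespace PP

/-- Denominator of the Möbius transformation attached to `g`. -/
def mdenom (g : SL2 ℝ) (x : ℝ) : ℝ := g.1 1 0 * x + g.1 1 1

/-- The Möbius transformation attached to `g`. -/
def moebius (g : SL2 ℝ) (x : ℝ) : ℝ := (g.1 0 0 * x + g.1 0 1) / (g.1 1 0 * x + g.1 1 1)

/-- `g` is a local (projective) piece of the homeomorphism `h` at the point `x`. -/
def IsLocalPiece (h : ℝ ≃ₜ ℝ) (g : SL2 ℝ) (x : ℝ) : Prop :=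
  mdenom g x ≠ 0 ∧ ∀ᶠ y in 𝓝 x, h y = moebius g y

/-- `h` is piecewise given by Möbius transformations of matrices in `M`:
outside of a finite set of breakpoints, `h` is locally a Möbius map from `M`. -/
def IsPiecewiseIn (M : Set (SL2 ℝ)) (h : ℝ ≃ₜ ℝ) : Prop :=
  ∃ B : Finset ℝ, ∀ x ∉ B, ∃ g ∈ M, IsLocalPiece h g x

/-- A breakpoint of `h` : a point where `h` is not locally projective. -/
def IsBreakpoint (h : ℝ ≃ₜ ℝ) (x : ℝ) : Prop := ¬ ∃ g : SL2 ℝ, IsLocalPiece h g x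

/-- Matrices with entries in the subring `A`. -/
def entriesIn (A : Subring ℝ) : Set (SL2 ℝ) := {g | ∀ i j, g.1 i j ∈ A}

lemma one_entriesIn (A : Subring ℝ) : (1 : SL2 ℝ) ∈ entriesIn A := by
  intro i j
  by_cases h : i = j <;>
    simp [entriesIn, Matrix.SpecialLinearGroup.coe_one, Matrix.one_apply, h, A.one_mem, A.zero_mem]

lemma mul_entriesIn {A : Subring ℝ} {g₁ g₂ : SL2 ℝ} (h₁ : g₁ ∈ entriesIn A)
    (h₂ : g₂ ∈ entriesIn A) : g₁ * g₂ ∈ entriesIn A := by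
  intro i j
  rw [Matrix.SpecialLinearGroup.coe_mul, Matrix.mul_apply]
  exact Subring.sum_mem A fun k _ => A.mul_mem (h₁ i k) (h₂ k j)

lemma inv_entriesIn {A : Subring ℝ} {g : SL2 ℝ} (h : g ∈ entriesIn A) :
    g⁻¹ ∈ entriesIn A := by
  intro i j
  have : (g⁻¹ : SL2 ℝ).1 = (g.1).adjugate := Matrix.SpecialLinearGroup.coe_inv g
  rw [this, Matrix.adjugate_fin_two]
  fin_cases i <;> fin_cases j <;>
    simp [Matrix.cons_val_zero, Matrix.cons_val_one] <;>
    first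
      | exact h 1 1
      | exact h 0 1
      | exact h 1 0
      | exact A.neg_mem (h 0 1)
      | exact A.neg_mem (h 1 0)
      | exact h 0 0

lemma det_eq (g : SL2 ℝ) : g.1 0 0 * g.1 1 1 - g.1 0 1 * g.1 1 0 = 1 := by
  have := g.2
  rwa [Matrix.det_fin_two] at this

/-- Composition of Möbius transformations (denominator part). -/
lemma mdenom_mul (g₁ g₂ : SL2 ℝ) (x : ℝ) (h₂ : mdenom g₂ x ≠ 0) :
    mdenom (g₁ * g₂) x = mdenom g₁ (moebius g₂ x) * mdenom g₂ x := by
  unfold mdenom moebius at *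
  rw [Matrix.SpecialLinearGroup.coe_mul, Matrix.mul_apply, Matrix.mul_apply, Fin.sum_univ_two,
    Fin.sum_univ_two]
  field_simp
  ring

lemma mdenom_mul_ne (g₁ g₂ : SL2 ℝ) (x : ℝ) (h₂ : mdenom g₂ x ≠ 0)
    (h₁ : mdenom g₁ (moebius g₂ x) ≠ 0) : mdenom (g₁ * g₂) x ≠ 0 := by
  rw [mdenom_mul g₁ g₂ x h₂]; exact mul_ne_zero h₁ h₂

lemma moebius_mul (g₁ g₂ : SL2 ℝ) (x : ℝ) (h₂ : mdenom g₂ x ≠ 0)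
    (h₁ : mdenom g₁ (moebius g₂ x) ≠ 0) :
    moebius (g₁ * g₂) x = moebius g₁ (moebius g₂ x) := by
  have hden := mdenom_mul_ne g₁ g₂ x h₂ h₁
  unfold mdenom moebius at *
  simp only [Matrix.SpecialLinearGroup.coe_mul, Matrix.mul_apply, Fin.sum_univ_two] at *
  rw [div_eq_div_iff hden h₁]
  field_simp
  ring

lemma inv_entry_00 (g : SL2 ℝ) : (g⁻¹ : SL2 ℝ).1 0 0 = g.1 1 1 := by
  simp [Matrix.SpecialLinearGroup.coe_inv, Matrix.adjugate_fin_two]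
lemma inv_entry_01 (g : SL2 ℝ) : (g⁻¹ : SL2 ℝ).1 0 1 = -g.1 0 1 := by
  simp [Matrix.SpecialLinearGroup.coe_inv, Matrix.adjugate_fin_two]
lemma inv_entry_10 (g : SL2 ℝ) : (g⁻¹ : SL2 ℝ).1 1 0 = -g.1 1 0 := by
  simp [Matrix.SpecialLinearGroup.coe_inv, Matrix.adjugate_fin_two]
lemma inv_entry_11 (g : SL2 ℝ) : (g⁻¹ : SL2 ℝ).1 1 1 = g.1 0 0 := by
  simp [Matrix.SpecialLinearGroup.coe_inv, Matrix.adjugate_fin_two]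

lemma moebius_one (x : ℝ) : moebius 1 x = x := by
  unfold moebius
  simp [Matrix.SpecialLinearGroup.coe_one, Matrix.one_apply]

lemma mdenom_one (x : ℝ) : mdenom 1 x = 1 := by
  unfold mdenom
  simp [Matrix.SpecialLinearGroup.coe_one, Matrix.one_apply]

lemma mdenom_inv (g : SL2 ℝ) (x : ℝ) (h : mdenom g x ≠ 0) :
    mdenom g⁻¹ (moebius g x) = 1 / mdenom g x := by
  have hdet := det_eq g
  unfold mdenom moebius at *
  rw [inv_entry_10, inv_entry_11]
  field_simp
  linear_combination hdet

lemma moebius_inv (g : SL2 ℝ) (x : ℝ) (h : mdenom g x ≠ 0) :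
    mdenom g⁻¹ (moebius g x) ≠ 0 ∧ moebius g⁻¹ (moebius g x) = x := by
  have h1 : mdenom g⁻¹ (moebius g x) = 1 / mdenom g x := mdenom_inv g x h
  have hne : mdenom g⁻¹ (moebius g x) ≠ 0 := by rw [h1]; exact one_div_ne_zero h
  refine ⟨hne, ?_⟩
  rw [← moebius_mul g⁻¹ g x h hne, inv_mul_cancel, moebius_one]

lemma mdenom_continuous (g : SL2 ℝ) : Continuous (mdenom g) := by
  unfold mdenom; fun_prop

lemma eventually_mdenom_ne (g : SL2 ℝ) {x : ℝ} (h : mdenom g x ≠ 0) :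
    ∀ᶠ y in 𝓝 x, mdenom g y ≠ 0 :=
  (mdenom_continuous g).continuousAt.eventually_ne h

lemma IsLocalPiece.mul {a b : ℝ ≃ₜ ℝ} {g₁ g₂ : SL2 ℝ} {x : ℝ}
    (h₁ : IsLocalPiece a g₁ (b x)) (h₂ : IsLocalPiece b g₂ x) :
    IsLocalPiece (a * b) (g₁ * g₂) x := by
  obtain ⟨d₂, e₂⟩ := h₂
  obtain ⟨d₁, e₁⟩ := h₁
  have hbx : b x = moebius g₂ x := e₂.self_of_nhds
  have d₁' : mdenom g₁ (moebius g₂ x) ≠ 0 := hbx ▸ d₁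
  refine ⟨mdenom_mul_ne g₁ g₂ x d₂ d₁', ?_⟩
  have hmap : ∀ᶠ y in 𝓝 x, a (b y) = moebius g₁ (b y) := by
    have hb : Filter.map b (𝓝 x) = 𝓝 (b x) := b.map_nhds_eq x
    rw [← hb] at e₁
    exact e₁
  have hd1ev : ∀ᶠ y in 𝓝 x, mdenom g₁ (b y) ≠ 0 := by
    have hb : Filter.map b (𝓝 x) = 𝓝 (b x) := b.map_nhds_eq x
    have := eventually_mdenom_ne g₁ d₁
    rw [← hb] at this
    exact this
  filter_upwards [e₂, hmap, hd1ev, eventually_mdenom_ne g₂ d₂] with y hy₂ hy₁ hyd₁ hyd₂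
  have hyd₁' : mdenom g₁ (moebius g₂ y) ≠ 0 := by rw [← hy₂]; exact hyd₁
  calc (a * b) y = a (b y) := rfl
    _ = moebius g₁ (b y) := hy₁
    _ = moebius g₁ (moebius g₂ y) := by rw [hy₂]
    _ = moebius (g₁ * g₂) y := (moebius_mul g₁ g₂ y hyd₂ hyd₁').symm

lemma IsLocalPiece.inv {h : ℝ ≃ₜ ℝ} {g : SL2 ℝ} {x : ℝ} (hp : IsLocalPiece h g x) :
    IsLocalPiece h⁻¹ g⁻¹ (h x) := by
  obtain ⟨d, e⟩ := hp
  have hx : h x = moebius g x := e.self_of_nhds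
  refine ⟨by rw [hx]; exact (moebius_inv g x d).1, ?_⟩
  have hb : Filter.map h (𝓝 x) = 𝓝 (h x) := h.map_nhds_eq x
  rw [← hb, Filter.eventually_map]
  filter_upwards [e, eventually_mdenom_ne g d] with y hy hyd
  calc (h⁻¹ : ℝ ≃ₜ ℝ) (h y) = y := h.symm_apply_apply y
    _ = moebius g⁻¹ (h y) := by rw [hy]; exact ((moebius_inv g y hyd).2).symm

lemma isLocalPiece_one (x : ℝ) : IsLocalPiece 1 1 x := by
  refine ⟨by rw [mdenom_one]; exact one_ne_zero, ?_⟩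
  filter_upwards with y
  rw [moebius_one]
  rfl

/-- The group of piecewise-`SL₂(A)` homeomorphisms of the real line. -/
def PW (A : Subring ℝ) : Subgroup (ℝ ≃ₜ ℝ) where
  carrier := {h | IsPiecewiseIn (entriesIn A) h}
  one_mem' := ⟨∅, fun x _ => ⟨1, one_entriesIn A, isLocalPiece_one x⟩⟩
  mul_mem' := by
    rintro a b ⟨Ba, hBa⟩ ⟨Bb, hBb⟩
    refine ⟨Bb ∪ Ba.image b.symm, fun x hx => ?_⟩
    rw [Finset.mem_union, not_or] at hx
    obtain ⟨hxb, hxa⟩ := hx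
    obtain ⟨g₂, hg₂A, hg₂⟩ := hBb x hxb
    have hbx : b x ∉ Ba := by
      intro hmem
      exact hxa (Finset.mem_image.2 ⟨b x, hmem, b.symm_apply_apply x⟩)
    obtain ⟨g₁, hg₁A, hg₁⟩ := hBa (b x) hbx
    exact ⟨g₁ * g₂, mul_entriesIn hg₁A hg₂A, hg₁.mul hg₂⟩
  inv_mem' := by
    rintro h ⟨B, hB⟩
    refine ⟨B.image h, fun y hy => ?_⟩
    have hxB : h.symm y ∉ B := by
      intro hmem
      exact hy (Finset.mem_image.2 ⟨h.symm y, hmem, h.apply_symm_apply y⟩)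
    obtain ⟨g, hgA, hg⟩ := hB (h.symm y) hxB
    have := hg.inv
    rw [h.apply_symm_apply y] at this
    exact ⟨g⁻¹, inv_entriesIn hgA, this⟩

/-- Real fixed points of hyperbolic elements of `SL₂(A)`. -/
def FixHyp (A : Subring ℝ) : Set ℝ :=
  {x | ∃ g : SL2 ℝ, g ∈ entriesIn A ∧ |Matrix.trace g.1| > 2 ∧
        mdenom g x ≠ 0 ∧ moebius g x = x}

lemma trace_conj (g q : SL2 ℝ) :
    Matrix.trace ((g⁻¹ * q * g : SL2 ℝ) : Matrix (Fin 2) (Fin 2) ℝ) = Matrix.trace q.1 := by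
  rw [Matrix.SpecialLinearGroup.coe_mul, Matrix.SpecialLinearGroup.coe_mul,
    Matrix.trace_mul_comm, ← Matrix.mul_assoc, ← Matrix.SpecialLinearGroup.coe_mul,
    mul_inv_cancel, Matrix.SpecialLinearGroup.coe_one, Matrix.one_mul]

lemma FixHyp.conj {A : Subring ℝ} {g : SL2 ℝ} {x : ℝ} (hgA : g ∈ entriesIn A)
    (hd : mdenom g x ≠ 0) (hfix : moebius g x ∈ FixHyp A) : x ∈ FixHyp A := by
  obtain ⟨q, hqA, hqtr, hqd, hqfix⟩ := hfix
  refine ⟨g⁻¹ * q * g, mul_entriesIn (mul_entriesIn (inv_entriesIn hgA) hqA) hgA,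
    by rw [trace_conj]; exact hqtr, ?_, ?_⟩
  all_goals
    have hden1 : mdenom (q * g) x ≠ 0 := mdenom_mul_ne q g x hd hqd
    have hmo1 : moebius (q * g) x = moebius g x := by
      rw [moebius_mul q g x hd hqd, hqfix]
    have hden2 : mdenom g⁻¹ (moebius (q * g) x) ≠ 0 := by
      rw [hmo1]; exact (moebius_inv g x hd).1
  · rw [mul_assoc]
    exact mdenom_mul_ne g⁻¹ (q * g) x hden1 hden2
  · rw [mul_assoc, moebius_mul g⁻¹ (q * g) x hden1 hden2, hmo1]
    exact (moebius_inv g x hd).2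

/-- `h` is locally an `SL₂(A)`-Möbius map away from the set `Φ`. -/
def LocallyIn (A : Subring ℝ) (Φ : Set ℝ) (h : ℝ ≃ₜ ℝ) : Prop :=
  ∀ x : ℝ, x ∉ Φ → ∃ g ∈ entriesIn A, IsLocalPiece h g x

/-- The complement of `Φ` is invariant under Möbius maps with entries in `A`. -/
def MoebiusInv (A : Subring ℝ) (Φ : Set ℝ) : Prop :=
  ∀ g ∈ entriesIn A, ∀ x : ℝ, mdenom g x ≠ 0 → x ∉ Φ → moebius g x ∉ Φ

lemma LocallyIn.mul {A : Subring ℝ} {Φ : Set ℝ} (hΦ : MoebiusInv A Φ) {a b : ℝ ≃ₜ ℝ}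
    (ha : LocallyIn A Φ a) (hb : LocallyIn A Φ b) : LocallyIn A Φ (a * b) := by
  intro x hx
  obtain ⟨g₂, hg₂A, hg₂⟩ := hb x hx
  have hbx : b x ∉ Φ := by
    have : b x = moebius g₂ x := hg₂.2.self_of_nhds
    rw [this]
    exact hΦ g₂ hg₂A x hg₂.1 hx
  obtain ⟨g₁, hg₁A, hg₁⟩ := ha (b x) hbx
  exact ⟨g₁ * g₂, mul_entriesIn hg₁A hg₂A, hg₁.mul hg₂⟩

/-- The group of piecewise-`SL₂(A)` homeomorphisms of the line all of whose
breakpoints lie in the set `Φ`. -/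
def BreakIn (A : Subring ℝ) (Φ : Set ℝ) (hΦ : MoebiusInv A Φ) : Subgroup (ℝ ≃ₜ ℝ) where
  carrier := {h | IsPiecewiseIn (entriesIn A) h ∧ LocallyIn A Φ h ∧ LocallyIn A Φ h⁻¹}
  one_mem' := by
    refine ⟨(PW A).one_mem', ?_, ?_⟩ <;>
      · intro x _
        exact ⟨1, one_entriesIn A, isLocalPiece_one x⟩
  mul_mem' := by
    rintro a b ⟨hapw, ha, ha'⟩ ⟨hbpw, hb, hb'⟩
    refine ⟨(PW A).mul_mem' hapw hbpw, LocallyIn.mul hΦ ha hb, ?_⟩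
    rw [_root_.mul_inv_rev]
    exact LocallyIn.mul hΦ hb' ha'
  inv_mem' := by
    rintro h ⟨hpw, h₁, h₂⟩
    refine ⟨(PW A).inv_mem' hpw, h₂, ?_⟩
    rw [inv_inv]
    exact h₁

lemma fixHyp_moebiusInv (A : Subring ℝ) : MoebiusInv A (FixHyp A) :=
  fun g hg x hd hx hmem => hx (FixHyp.conj hg hd hmem)

/-- The group `H(A)`: piecewise-`SL₂(A)` homeomorphisms of the line whose
breakpoints are fixed points of hyperbolic elements of `SL₂(A)`. -/
def HGroup (A : Subring ℝ) : Subgroup (ℝ ≃ₜ ℝ) := BreakIn A (FixHyp A) (fixHyp_moebiusInv A)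

/-- The ring `ℤ[1/S]` of `S`-integers, as a subring of `ℚ`. -/
def SIntQ (S : Set ℕ) : Subring ℚ := Subring.closure {x : ℚ | ∃ p ∈ S, x = (p : ℚ)⁻¹}

/-- The ring `ℤ[1/S]` of `S`-integers, as a subring of `ℝ`. -/
def SIntR (S : Set ℕ) : Subring ℝ := Subring.closure {x : ℝ | ∃ p ∈ S, x = (p : ℝ)⁻¹}

/-- The group `Γ_S` of piecewise-`SL₂(ℤ[1/S])` homeomorphisms of the line. -/
def Gamma (S : Set ℕ) : Subgroup (ℝ ≃ₜ ℝ) := PW (SIntR S)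

/-- `ℚ` as a subring of `ℝ`. -/
def ratSubring : Subring ℝ := (Rat.castHom ℝ).range

/-- `ℤ` as a subring of `ℝ`. -/
def intSubring : Subring ℝ := (Int.castRingHom ℝ).range

/-- The group `H(ℚ)` of piecewise-`SL₂(ℚ)` homeomorphisms of the line. -/
def HQ : Subgroup (ℝ ≃ₜ ℝ) := PW ratSubring

lemma ratSubring_div_mem {x y : ℝ} (hx : x ∈ ratSubring) (hy : y ∈ ratSubring) :
    x / y ∈ ratSubring := by
  obtain ⟨q, rfl⟩ := RingHom.mem_range.1 hx
  obtain ⟨r, rfl⟩ := RingHom.mem_range.1 hy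
  refine RingHom.mem_range.2 ⟨q / r, ?_⟩
  simp [Rat.cast_div]

lemma moebius_mem_rat {g : SL2 ℝ} (hg : g ∈ entriesIn ratSubring) {y : ℝ}
    (hy : y ∈ ratSubring) : moebius g y ∈ ratSubring := by
  unfold moebius
  exact ratSubring_div_mem
    (ratSubring.add_mem (ratSubring.mul_mem (hg 0 0) hy) (hg 0 1))
    (ratSubring.add_mem (ratSubring.mul_mem (hg 1 0) hy) (hg 1 1))

lemma rat_moebiusInv {A : Subring ℝ} (hA : A ≤ ratSubring) :
    MoebiusInv A (ratSubring : Set ℝ) := by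
  intro g hg x hd hx hmem
  apply hx
  have : moebius g⁻¹ (moebius g x) = x := (moebius_inv g x hd).2
  rw [← this]
  exact moebius_mem_rat (fun i j => hA (inv_entriesIn hg i j)) hmem

lemma intSubring_le_rat : intSubring ≤ ratSubring := by
  rintro x ⟨n, rfl⟩
  refine RingHom.mem_range.2 ⟨(n : ℚ), ?_⟩
  simp

/-- Thompson's group `F` realized as `H_ℚ(ℤ)`: piecewise-`SL₂(ℤ)` homeomorphisms
of the line with rational breakpoints. -/
def Thompson : Subgroup (ℝ ≃ₜ ℝ) :=
  BreakIn intSubring (ratSubring : Set ℝ) (rat_moebiusInv intSubring_le_rat)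

/-- The group `H_ℚ(ℚ)` of piecewise-`SL₂(ℚ)` homeomorphisms of the line with
rational breakpoints. -/
def HQrat : Subgroup (ℝ ≃ₜ ℝ) :=
  BreakIn ratSubring (ratSubring : Set ℝ) (rat_moebiusInv le_rfl)

/-- A bounded real-valued function. -/
def Bdd {X : Type*} (f : X → ℝ) : Prop := ∃ C, ∀ x, |f x| ≤ C

/-- A mean: a normalized positive linear functional on bounded functions. -/
structure MeanOn (X : Type*) where
  toFun : (X → ℝ) → ℝ
  add' : ∀ f g : X → ℝ, Bdd f → Bdd g → toFun (f + g) = toFun f + toFun g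
  smul' : ∀ (c : ℝ) (f : X → ℝ), Bdd f → toFun (c • f) = c * toFun f
  mono' : ∀ f g : X → ℝ, Bdd f → Bdd g → (∀ x, f x ≤ g x) → toFun f ≤ toFun g
  one' : toFun (fun _ => 1) = 1

/-- A subgroup `H ≤ G` is co-amenable in `G` if there is a `G`-invariant mean on `G/H`. -/
def CoAmenableIn {G : Type*} [Group G] (H : Subgroup G) : Prop :=
  ∃ m : MeanOn (G ⧸ H), ∀ (g : G) (f : (G ⧸ H) → ℝ), Bdd f →
    m.toFun (fun x => f (g • x)) = m.toFun f

end PP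

open PP

/-- The family may be uncountable; by Lindelöf, countably many of the `U i` already cover
their union. -/
lemma ae_exists_of_mem_iUnion_isOpen {X ι : Type*} [TopologicalSpace X]
    [SecondCountableTopology X] [MeasurableSpace X] {μ : Measure X} {U : ι → Set X}
    (hU : ∀ i, IsOpen (U i)) {P : ι → X → Prop} (hP : ∀ i, ∀ᵐ x ∂μ, P i x) :
    ∀ᵐ x ∂μ, x ∈ ⋃ i, U i → ∃ i, x ∈ U i ∧ P i x := by
  obtain ⟨T, hT, hTU⟩ := TopologicalSpace.isOpen_iUnion_countable U hU
  filter_upwards [(ae_ball_iff hT).2 fun i _ => hP i] with x hPx hx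
  rw [← hTU] at hx
  obtain ⟨i, hiT, hxi⟩ := Set.mem_iUnion₂.1 hx
  exact ⟨i, hxi, hPx i hiT⟩

lemma quadratic_coeffs_eq_zero_of_eventually {a b c x : ℝ}
    (h : ∀ᶠ y in 𝓝 x, a * y ^ 2 + b * y + c = 0) : a = 0 ∧ b = 0 ∧ c = 0 := by
  obtain ⟨ε, hε, hball⟩ := Metric.eventually_nhds_iff.1 h
  have hδ : 0 < ε / 2 := half_pos hε
  have hmid := hball (Metric.mem_ball_self hε)
  have hright : a * (x + ε / 2) ^ 2 + b * (x + ε / 2) + c = 0 :=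
    hball (by rw [Real.dist_eq, add_sub_cancel_left, abs_of_pos hδ]; linarith)
  have hleft : a * (x - ε / 2) ^ 2 + b * (x - ε / 2) + c = 0 :=
    hball (by rw [Real.dist_eq, sub_sub_cancel_left, abs_neg, abs_of_pos hδ]; linarith)
  -- second and first differences at the three points `x - ε/2, x, x + ε/2`
  have ha : a = 0 := by
    have : a * (2 * (ε / 2) ^ 2) = 0 := by linear_combination hright + hleft - 2 * hmid
    simpa [hδ.ne'] using this
  have hb : b = 0 := by
    have : b * (2 * (ε / 2)) = 0 := by
      linear_combination hright - hleft - (4 * x * (ε / 2)) * ha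
    simpa [hδ.ne'] using this
  exact ⟨ha, hb, by linear_combination hmid - x ^ 2 * ha - x * hb⟩

namespace PP

lemma eq_one_or_eq_neg_one_of_eventually_moebius_eq_self {q : SL2 ℝ} {x : ℝ}
    (hq : mdenom q x ≠ 0) (hfix : ∀ᶠ y in 𝓝 x, moebius q y = y) :
    q = 1 ∨ (q : Matrix (Fin 2) (Fin 2) ℝ) = -1 := by
  have hpoly : ∀ᶠ y in 𝓝 x, q.1 1 0 * y ^ 2 + (q.1 1 1 - q.1 0 0) * y + -q.1 0 1 = 0 := by
    filter_upwards [hfix, eventually_mdenom_ne q hq] with y hy hyd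
    unfold mdenom at hyd
    rw [moebius, div_eq_iff hyd] at hy
    linear_combination -hy
  obtain ⟨h10, hdiag, h01⟩ := quadratic_coeffs_eq_zero_of_eventually hpoly
  rw [neg_eq_zero] at h01
  rw [sub_eq_zero] at hdiag
  have hdet := det_eq q
  rw [h10, h01, hdiag] at hdet
  rcases mul_self_eq_one_iff.1 (by linarith : q.1 0 0 * q.1 0 0 = 1) with h00 | h00
  · left
    ext i j
    fin_cases i <;> fin_cases j <;> simp_all
  · right
    ext i j
    fin_cases i <;> fin_cases j <;> simp_all

lemma isOpen_setOf_isLocalPiece (h : ℝ ≃ₜ ℝ) (g : SL2 ℝ) :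
    IsOpen {x : ℝ | IsLocalPiece h g x} :=
  (isOpen_ne_fun (mdenom_continuous g) continuous_const).inter isOpen_setOfPred_eventually_nhds

lemma IsLocalPiece.apply_eq {h : ℝ ≃ₜ ℝ} {g : SL2 ℝ} {x : ℝ} (hg : IsLocalPiece h g x) :
    h x = moebius g x :=
  hg.2.self_of_nhds

lemma IsLocalPiece.inv_mul_eq_one_or_eq_neg_one {h : ℝ ≃ₜ ℝ} {g g' : SL2 ℝ} {x : ℝ}
    (hg : IsLocalPiece h g x) (hg' : IsLocalPiece h g' x) :
    g⁻¹ * g' = 1 ∨ ((g⁻¹ * g' : SL2 ℝ) : Matrix (Fin 2) (Fin 2) ℝ) = -1 := by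
  refine eq_one_or_eq_neg_one_of_eventually_moebius_eq_self
    (mdenom_mul_ne _ _ _ hg'.1 ?_) ?_
  · rw [← hg'.apply_eq, hg.apply_eq]
    exact (moebius_inv g x hg.1).1
  filter_upwards [hg.2, hg'.2, eventually_mdenom_ne g hg.1, eventually_mdenom_ne g' hg'.1]
    with y hy hy' hyd hyd'
  have hinv := moebius_inv g y hyd
  rw [← hy, hy'] at hinv
  rw [moebius_mul _ _ _ hyd' hinv.1, hinv.2]

lemma IsLocalPiece.act_eq {A : Subring ℝ} {Z : Type*} {ρ : SL2 ℝ → Z → Z}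
    (hmul : ∀ g g', g ∈ entriesIn A → g' ∈ entriesIn A → ∀ z, ρ (g * g') z = ρ g (ρ g' z))
    (hcenter : ∀ u : SL2 ℝ, u ∈ entriesIn A →
      (u : Matrix (Fin 2) (Fin 2) ℝ) = -1 → ∀ z, ρ u z = z)
    {h : ℝ ≃ₜ ℝ} {g g' : SL2 ℝ} {x : ℝ} (hgA : g ∈ entriesIn A) (hgA' : g' ∈ entriesIn A)
    (hg : IsLocalPiece h g x) (hg' : IsLocalPiece h g' x) (z : Z) : ρ g' z = ρ g z := by
  have hqA : g⁻¹ * g' ∈ entriesIn A := mul_entriesIn (inv_entriesIn hgA) hgA'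
  rcases hg.inv_mul_eq_one_or_eq_neg_one hg' with hq | hq
  · rw [inv_mul_eq_one.1 hq]
  · rw [← mul_inv_cancel_left g g', hmul _ _ hgA hqA, hcenter _ hqA hq]

end PP

/-- Let `A < ℝ` be a unital subring, `K₀` a convex compact
`PSL₂(A)`-space (an `SL₂(A)`-action by affine homeomorphisms on a convex compact
subset of a locally convex Hausdorff space, with `-1` acting trivially), and `H` a
group of piecewise-`SL₂(A)` homeomorphisms acting on measurable maps
`f : ℙ¹(ℝ) → K₀` by `(h·f)(x) = h|_{h⁻¹x} (f (h⁻¹x))`. If for every `g ∈ PSL₂(A)`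
and almost every `x` some `h ∈ H` has projective piece `g` at `x`, then `f` is fixed
by `H` if and only if it is fixed by `PSL₂(A)`. -/
theorem fixed_iff_fixed_of_local_fill (A : Subring ℝ)
    (E : Type) (K₀ : Set E) (ρ : SL2 ℝ → K₀ → K₀)
    (hmul : ∀ g g', g ∈ entriesIn A → g' ∈ entriesIn A → ∀ z, ρ (g * g') z = ρ g (ρ g' z))
    (hcenter : ∀ u : SL2 ℝ, u ∈ entriesIn A →
      (u : Matrix (Fin 2) (Fin 2) ℝ) = -1 → ∀ z, ρ u z = z)
    (H : Subgroup (ℝ ≃ₜ ℝ)) (hH : ∀ h ∈ H, IsPiecewiseIn (entriesIn A) h)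
    (hfill : ∀ g ∈ entriesIn A, ∀ᵐ x ∂(volume : Measure ℝ), ∃ h ∈ H, IsLocalPiece h g x)
    (f : ℝ → K₀) :
    (∀ h ∈ H, ∀ᵐ x ∂(volume : Measure ℝ), ∀ g ∈ entriesIn A,
        IsLocalPiece h g x → f (h x) = ρ g (f x)) ↔
    (∀ g ∈ entriesIn A, ∀ᵐ x ∂(volume : Measure ℝ),
        mdenom g x ≠ 0 → f (moebius g x) = ρ g (f x)) := by
  constructor
  · intro hfixH g hgA
    have hcover := ae_exists_of_mem_iUnion_isOpen (μ := volume)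
      (fun h : H => isOpen_setOf_isLocalPiece h g) (fun h => hfixH h h.2)
    filter_upwards [hfill g hgA, hcover] with x ⟨h, hhH, hxh⟩ hx _
    obtain ⟨h', hxh', hfix'⟩ := hx (Set.mem_iUnion.2 ⟨⟨h, hhH⟩, hxh⟩)
    rw [← IsLocalPiece.apply_eq hxh']
    exact hfix' g hgA hxh'
  · intro hfixG h hhH
    obtain ⟨B, hB⟩ := hH h hhH
    have hcover := ae_exists_of_mem_iUnion_isOpen (μ := volume)
      (fun g : entriesIn A => isOpen_setOf_isLocalPiece h g) (fun g => hfixG g g.2)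
    filter_upwards [hcover, B.finite_toSet.countable.ae_notMem volume] with x hx hxB g hgA hxg
    obtain ⟨g₀, hgA₀, hxg₀⟩ := hB x hxB
    obtain ⟨g₁, hxg₁, hfix₁⟩ := hx (Set.mem_iUnion.2 ⟨⟨g₀, hgA₀⟩, hxg₀⟩)
    rw [IsLocalPiece.apply_eq hxg₁, hfix₁ hxg₁.1, IsLocalPiece.act_eq hmul hcenter g₁.2 hgA hxg₁ hxg]
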